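/- arXiv:1402.4825 — 2 statements merged into one kernel-verified Lean document; each statement's English description precedes it below -/
import Mathlib

section
/- Let f be an almost periodic function on ℝ. Then the Bohr spectrum of f, i.e. the set of λ ∈ ℝ for which there exists c ≠ 0 with lim_{T→∞} (1/(2T)) ∫_{−T}^{T} f(t)·exp(−i·λ·t) dt = c, is countable. -/
/-!
A trigonometric polynomial has vanishing Fourier–Bohr coefficients outside its finite set of
frequencies, because the means of a non-constant exponential `exp (i w t)` over `[-T, T]` are
`O(1 / T)`. The coefficient at a fixed frequency is 1-Lipschitz in the function for the sup
norm, the means being averages. Approximating `f` by trigonometric polynomials `P n`, every `λ`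
outside the countable union of their frequency sets has `|f̂(λ)| ≤ ‖f - P n‖ → 0`.
-/

open Complex MeasureTheory Filter Topology

noncomputable section

/-- The set of generalized trigonometric polynomials, viewed as bounded continuous functions. -/
def trigPoly : Set (BoundedContinuousFunction ℝ ℂ) :=
  {f | ∃ (N : ℕ) (a : Fin N → ℂ) (lam : Fin N → ℝ),
    ∀ t : ℝ, f t = ∑ j, a j * Complex.exp (Complex.I * lam j * t)}

/-- The almost periodic functions: the sup-norm closure of the trigonometric polynomials. -/
def AP : Set (BoundedContinuousFunction ℝ ℂ) := closure trigPoly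

/-- `fourierBohrAt f lam c` says that the Fourier–Bohr coefficient of `f` at `lam` exists
and equals `c`. -/
def fourierBohrAt (f : BoundedContinuousFunction ℝ ℂ) (lam : ℝ) (c : ℂ) : Prop :=
  Filter.Tendsto
    (fun T : ℝ => ((1 / (2 * T) : ℝ) : ℂ) *
      ∫ t in (-T)..T, f t * Complex.exp (-Complex.I * lam * t))
    Filter.atTop (nhds c)

/-- The Bohr spectrum of `f`. -/
def bohrSpectrum (f : BoundedContinuousFunction ℝ ℂ) : Set ℝ :=
  {lam | ∃ c : ℂ, c ≠ 0 ∧ fourierBohrAt f lam c}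

/-- `APin Λ` is the algebra `AP_Λ` of almost periodic functions with Bohr spectrum in `Λ`. -/
def APin (Λ : Set ℝ) : Set (BoundedContinuousFunction ℝ ℂ) :=
  {f | f ∈ AP ∧ bohrSpectrum f ⊆ Λ}

def bohrMean (g : ℝ → ℂ) (T : ℝ) : ℂ :=
  ((1 / (2 * T) : ℝ) : ℂ) * ∫ t in (-T)..T, g t

lemma fourierBohrAt_iff {f : BoundedContinuousFunction ℝ ℂ} {lam : ℝ} {c : ℂ} :
    fourierBohrAt f lam c ↔
      Tendsto (bohrMean fun t => f t * exp (-I * lam * t)) atTop (𝓝 c) :=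
  Iff.rfl

lemma norm_bohrMean_le {g : ℝ → ℂ} {C T : ℝ} (hg : ∀ t, ‖g t‖ ≤ C) (hT : 0 < T) :
    ‖bohrMean g T‖ ≤ C := by
  have hint := intervalIntegral.norm_integral_le_of_norm_le_const (a := -T) (b := T)
    fun t _ => hg t
  rw [bohrMean, norm_mul, norm_real, Real.norm_of_nonneg (by positivity)]
  calc 1 / (2 * T) * ‖∫ t in (-T)..T, g t‖ ≤ 1 / (2 * T) * (C * |T - -T|) := by gcongr
    _ = C := by rw [abs_of_pos (by linarith)]; field_simp; ring

lemma bohrMean_sub {g h : ℝ → ℂ} (hg : Continuous g) (hh : Continuous h) (T : ℝ) :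
    bohrMean (g - h) T = bohrMean g T - bohrMean h T := by
  simp only [bohrMean, Pi.sub_apply,
    intervalIntegral.integral_sub (hg.intervalIntegrable _ _) (hh.intervalIntegrable _ _), mul_sub]

lemma bohrMean_sum {ι : Type*} (s : Finset ι) (a : ι → ℂ) {g : ι → ℝ → ℂ}
    (hg : ∀ i, Continuous (g i)) (T : ℝ) :
    bohrMean (fun t => ∑ i ∈ s, a i * g i t) T = ∑ i ∈ s, a i * bohrMean (g i) T := by
  simp only [bohrMean, intervalIntegral.integral_finsetSum fun i _ =>
    ((hg i).const_mul (a i)).intervalIntegrable _ _, intervalIntegral.integral_const_mul,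
    Finset.mul_sum, mul_left_comm]

lemma norm_exp_I_mul_ofReal_mul (w t : ℝ) : ‖exp (I * w * t)‖ = 1 := by
  simpa [mul_assoc] using norm_exp_I_mul_ofReal (w * t)

lemma tendsto_bohrMean_exp {w : ℝ} (hw : w ≠ 0) :
    Tendsto (bohrMean fun t => exp (I * w * t)) atTop (𝓝 0) := by
  have hIw : I * w ≠ 0 := mul_ne_zero I_ne_zero (ofReal_ne_zero.mpr hw)
  have hbound : ∀ T > 0, ‖bohrMean (fun t => exp (I * w * t)) T‖ ≤ 1 / (T * |w|) := by
    intro T hT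
    have hdiff : ‖exp (I * w * T) - exp (I * w * ↑(-T))‖ ≤ 2 := by
      linarith [norm_sub_le (exp (I * w * T)) (exp (I * w * ↑(-T))),
        norm_exp_I_mul_ofReal_mul w T, norm_exp_I_mul_ofReal_mul w (-T)]
    have hIw_norm : ‖I * w‖ = |w| := by simp
    rw [bohrMean, integral_exp_mul_complex hIw, norm_mul, norm_div, hIw_norm, norm_real,
      Real.norm_of_nonneg (by positivity)]
    calc 1 / (2 * T) * (‖exp (I * w * T) - exp (I * w * ↑(-T))‖ / |w|)
        ≤ 1 / (2 * T) * (2 / |w|) := by gcongr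
      _ = 1 / (T * |w|) := by field_simp
  have hdecay : Tendsto (fun T : ℝ => 1 / (T * |w|)) atTop (𝓝 0) :=
    tendsto_const_nhds.div_atTop (tendsto_id.atTop_mul_const (abs_pos.mpr hw))
  exact squeeze_zero_norm' (eventually_gt_atTop 0 |>.mono hbound) hdecay

lemma exists_finite_fourierBohrAt_zero_of_mem_trigPoly {P : BoundedContinuousFunction ℝ ℂ}
    (hP : P ∈ trigPoly) : ∃ F : Set ℝ, F.Finite ∧ ∀ l ∉ F, fourierBohrAt P l 0 := by
  obtain ⟨N, a, lam, hP⟩ := hP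
  refine ⟨Set.range lam, Set.finite_range lam, fun l hl => ?_⟩
  have hmod : (fun t : ℝ => P t * exp (-I * l * t)) =
      fun t : ℝ => ∑ j, a j * exp (I * ↑(lam j - l) * t) := by
    ext t
    rw [hP, Finset.sum_mul]
    refine Finset.sum_congr rfl fun j _ => ?_
    rw [mul_assoc, ← exp_add]
    push_cast
    ring_nf
  rw [fourierBohrAt_iff, hmod, funext (bohrMean_sum _ a fun j => by fun_prop)]
  simpa using tendsto_finsetSum _ fun j _ =>
    (tendsto_bohrMean_exp (sub_ne_zero.mpr fun h => hl ⟨j, h⟩)).const_mul (a j)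

lemma norm_sub_le_of_fourierBohrAt {f g : BoundedContinuousFunction ℝ ℂ} {l : ℝ} {c d : ℂ}
    (hf : fourierBohrAt f l c) (hg : fourierBohrAt g l d) : ‖c - d‖ ≤ ‖f - g‖ := by
  have hmeans : ∀ T, bohrMean (fun t => f t * exp (-I * l * t)) T -
      bohrMean (fun t => g t * exp (-I * l * t)) T =
        bohrMean (fun t => (f - g) t * exp (-I * l * t)) T := by
    intro T
    rw [← bohrMean_sub (by fun_prop) (by fun_prop)]
    congr 1
    ext t
    simp [sub_mul]
  rw [fourierBohrAt_iff] at hf hg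
  refine le_of_tendsto (hf.sub hg).norm ?_
  filter_upwards [eventually_gt_atTop 0] with T hT
  rw [hmeans]
  refine norm_bohrMean_le (fun t => ?_) hT
  rw [norm_mul, neg_mul, ← mul_neg, ← ofReal_neg, norm_exp_I_mul_ofReal_mul, mul_one]
  exact (f - g).norm_coe_le_norm t

/-- The Bohr spectrum of an almost periodic function is countable. -/
theorem bohrSpectrum_countable (f : BoundedContinuousFunction ℝ ℂ) (hf : f ∈ AP) :
    Set.Countable (bohrSpectrum f) := by
  obtain ⟨P, hP_trig, hP_lim⟩ := mem_closure_iff_seq_limit.mp hf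
  choose F hF_fin hF using fun n => exists_finite_fourierBohrAt_zero_of_mem_trigPoly (hP_trig n)
  refine (Set.countable_iUnion fun n => (hF_fin n).countable).mono fun l ⟨c, hc, hfc⟩ => ?_
  by_contra hl
  simp only [Set.mem_iUnion, not_exists] at hl
  have hc_le : ‖0 - c‖ ≤ 0 := ge_of_tendsto (tendsto_iff_norm_sub_tendsto_zero.mp hP_lim)
    (Eventually.of_forall fun n => norm_sub_le_of_fourierBohrAt (hF n l (hl n)) hfc)
  exact hc (by simpa using hc_le)
end
end

section
/- Let F_1,…,F_n ∈ AP. There exist Q_1,…,Q_n ∈ AP with Σ_{j=1}^n Q_j·F_j = 1 identically on ℝ if and only if there exists δ > 0 such that Σ_{j=1}^n |F_j(t)| ≥ δ for all t ∈ ℝ. -/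
open Complex MeasureTheory Filter Topology

noncomputable section

/-!
`AP` is the closure of the *-algebra spanned by the characters `t ↦ exp (i λ t)`, hence a closed
*-subalgebra of the C*-algebra `ℝ →ᵇ ℂ`; by spectral permanence it is inverse-closed there.
If `Σ |F_j| ≥ δ`, then `G = Σ |F_j|²` is bounded below, so it is invertible in `ℝ →ᵇ ℂ`, hence in
`AP`, and `Q_j = G⁻¹ · conj F_j` solves the Bézout equation. Conversely, a Bézout equation gives
`1 ≤ (Σ ‖Q_j‖) · Σ |F_j(t)|` at every `t`.
-/

open BoundedContinuousFunction Set

theorem StarSubalgebra.exists_sum_mul_eq_one_of_isUnit {A ι : Type*} [CStarAlgebra A]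
    [Fintype ι] (S : StarSubalgebra ℂ A) [IsClosed (S : Set A)] {f : ι → A}
    (hf : ∀ j, f j ∈ S) (hunit : IsUnit (∑ j, star (f j) * f j)) :
    ∃ q : ι → A, (∀ j, q j ∈ S) ∧ ∑ j, q j * f j = 1 := by
  have hmem : ∑ j, star (f j) * f j ∈ S :=
    sum_mem fun j _ => mul_mem (star_mem (hf j)) (hf j)
  obtain ⟨u, hu⟩ := (S.coe_isUnit (a := ⟨_, hmem⟩)).1 hunit
  refine ⟨fun j => ((u⁻¹ : Sˣ) : S) * star (f j),
    fun j => mul_mem (u⁻¹ : Sˣ).1.2 (star_mem (hf j)), ?_⟩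
  have hinv := congr_arg Subtype.val u.inv_mul
  rw [hu] at hinv
  simpa only [mul_assoc, ← Finset.mul_sum, MulMemClass.coe_mul, OneMemClass.coe_one] using hinv

namespace BoundedContinuousFunction

variable {α ι 𝕜 : Type*} [TopologicalSpace α] [Fintype ι]

theorem isUnit_of_forall_le_norm [NormedField 𝕜] (g : α →ᵇ 𝕜) {c : ℝ} (hc : 0 < c)
    (hg : ∀ t, c ≤ ‖g t‖) : IsUnit g := by
  have hg0 : ∀ t, g t ≠ 0 := fun t => norm_pos_iff.1 (hc.trans_le (hg t))
  let ginv : α →ᵇ 𝕜 := .ofNormedAddCommGroup (fun t => (g t)⁻¹) (g.continuous.inv₀ hg0) c⁻¹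
    fun t => by rw [norm_inv]; exact inv_anti₀ hc (hg t)
  exact .of_mul_eq_one ginv (ext fun t => mul_inv_cancel₀ (hg0 t))

theorem isUnit_sum_star_mul_self [RCLike 𝕜] (f : ι → α →ᵇ 𝕜) {δ : ℝ} (hδ : 0 < δ)
    (hf : ∀ t, δ ≤ ∑ j, ‖f j t‖) : IsUnit (∑ j, star (f j) * f j) := by
  refine isUnit_of_forall_le_norm _ (c := δ ^ 2 / (Fintype.card ι + 1)) (by positivity)
    fun t => ?_
  have hval : (∑ j, star (f j) * f j) t = ((∑ j, ‖f j t‖ ^ 2 : ℝ) : 𝕜) := by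
    simp [RCLike.conj_mul]
  have hsq_nonneg : 0 ≤ ∑ j, ‖f j t‖ ^ 2 := by positivity
  rw [hval, RCLike.norm_ofReal, abs_of_nonneg hsq_nonneg, div_le_iff₀ (by positivity)]
  calc δ ^ 2 ≤ (∑ j, ‖f j t‖) ^ 2 := pow_le_pow_left₀ hδ.le (hf t) 2
    _ ≤ Fintype.card ι * ∑ j, ‖f j t‖ ^ 2 := sq_sum_le_card_mul_sum_sq
    _ ≤ (∑ j, ‖f j t‖ ^ 2) * (Fintype.card ι + 1) := by linarith

theorem exists_pos_le_sum_norm_of_sum_mul_eq_one [NormedRing 𝕜] [NormOneClass 𝕜]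
    (F Q : ι → α →ᵇ 𝕜) (h : ∀ t, ∑ j, Q j t * F j t = 1) :
    ∃ δ > 0, ∀ t, δ ≤ ∑ j, ‖F j t‖ := by
  set C := ∑ j, ‖Q j‖
  refine ⟨(C + 1)⁻¹, by positivity, fun t => ?_⟩
  have hF : 0 ≤ ∑ j, ‖F j t‖ := by positivity
  have hQ : ∀ j, ‖Q j t‖ ≤ C := fun j => (norm_coe_le_norm _ _).trans <|
    Finset.single_le_sum (fun i _ => norm_nonneg (Q i)) (Finset.mem_univ j)
  have hbound : 1 ≤ C * ∑ j, ‖F j t‖ :=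
    calc (1 : ℝ) = ‖∑ j, Q j t * F j t‖ := by rw [h, norm_one]
      _ ≤ ∑ j, ‖Q j t‖ * ‖F j t‖ := (norm_sum_le _ _).trans <|
          Finset.sum_le_sum fun j _ => norm_mul_le _ _
      _ ≤ C * ∑ j, ‖F j t‖ := by
          rw [Finset.mul_sum]
          exact Finset.sum_le_sum fun j _ => mul_le_mul_of_nonneg_right (hQ j) (norm_nonneg _)
  rw [inv_le_iff_one_le_mul₀ (by positivity)]
  linarith

end BoundedContinuousFunction

def expChar (l : ℝ) : ℝ →ᵇ ℂ :=
  .ofNormedAddCommGroup (fun t => exp (I * l * t)) (by fun_prop) 1 fun t => by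
    rw [norm_exp]; simp

lemma expChar_apply (l t : ℝ) : expChar l t = exp (I * l * t) := rfl

lemma expChar_zero : expChar 0 = 1 := by
  ext t; simp [expChar_apply]

lemma expChar_add (a b : ℝ) : expChar (a + b) = expChar a * expChar b := by
  ext t
  simp only [expChar_apply, coe_mul, Pi.mul_apply, ← exp_add]
  push_cast; ring_nf

lemma star_expChar (l : ℝ) : star (expChar l) = expChar (-l) := by
  ext t
  simp only [star_apply, expChar_apply, RCLike.star_def, ← exp_conj, map_mul, conj_I,
    conj_ofReal]
  push_cast; ring_nf

def expCharSubmonoid : Submonoid (ℝ →ᵇ ℂ) where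
  carrier := range expChar
  one_mem' := ⟨0, expChar_zero⟩
  mul_mem' := by rintro _ _ ⟨a, rfl⟩ ⟨b, rfl⟩; exact ⟨a + b, expChar_add a b⟩

lemma trigPoly_eq_span : trigPoly = Submodule.span ℂ (range expChar) := by
  ext f
  rw [SetLike.mem_coe, Submodule.mem_span_set']
  constructor
  · rintro ⟨N, a, lam, hf⟩
    exact ⟨N, a, fun j => ⟨_, lam j, rfl⟩, ext fun t => by simp [hf, expChar_apply]⟩
  · rintro ⟨N, a, g, rfl⟩
    choose lam hlam using fun j => (g j).2
    exact ⟨N, a, lam, fun t => by simp [← hlam, expChar_apply]⟩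

lemma trigPoly_eq_starAlgebraAdjoin : trigPoly = StarAlgebra.adjoin ℂ (range expChar) := by
  have hstar : star (range expChar) = range expChar := by
    ext f
    refine ⟨?_, ?_⟩ <;> rintro ⟨l, hl⟩ <;> refine ⟨-l, ?_⟩
    · rw [← star_expChar, hl, star_star]
    · rw [← hl, star_expChar]
  have hclosure : Submonoid.closure (range expChar) = expCharSubmonoid :=
    expCharSubmonoid.closure_eq
  rw [← StarSubalgebra.coe_toSubalgebra, ← Subalgebra.coe_toSubmodule,
    StarAlgebra.adjoin_eq_span, hstar, union_self, hclosure]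
  exact trigPoly_eq_span

def apStarSubalgebra : StarSubalgebra ℂ (ℝ →ᵇ ℂ) :=
  (StarAlgebra.adjoin ℂ (range expChar)).topologicalClosure

instance : IsClosed (apStarSubalgebra : Set (ℝ →ᵇ ℂ)) :=
  StarSubalgebra.isClosed_topologicalClosure _

lemma AP_eq_apStarSubalgebra : AP = apStarSubalgebra := by
  rw [AP, trigPoly_eq_starAlgebraAdjoin]; rfl

/-- The corona theorem for `AP`: `(F_1,…,F_n)` admits a Bézout equation in `AP` iff
`Σ |F_j|` is bounded away from zero. -/
theorem corona_AP (n : ℕ) (F : Fin n → BoundedContinuousFunction ℝ ℂ)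
    (hF : ∀ j, F j ∈ AP) :
    (∃ Q : Fin n → BoundedContinuousFunction ℝ ℂ, (∀ j, Q j ∈ AP) ∧
        ∀ t : ℝ, ∑ j, Q j t * F j t = 1) ↔
      (∃ δ > 0, ∀ t : ℝ, δ ≤ ∑ j, ‖F j t‖) := by
  refine ⟨fun ⟨Q, _, hQ⟩ => exists_pos_le_sum_norm_of_sum_mul_eq_one F Q hQ,
    fun ⟨δ, hδ, hδF⟩ => ?_⟩
  simp only [AP_eq_apStarSubalgebra, SetLike.mem_coe] at hF ⊢
  obtain ⟨Q, hQ, hQF⟩ := apStarSubalgebra.exists_sum_mul_eq_one_of_isUnit hF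
    (isUnit_sum_star_mul_self F hδ hδF)
  exact ⟨Q, hQ, fun t => by simpa using congr($hQF t)⟩
end
end
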